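/- arXiv:1602.03583 — 3 statements merged into one kernel-verified Lean document; each statement's English description precedes it below -/
import Mathlib

section
/- Let p be an odd prime, k ≥ 2 an integer, and a, n integers with gcd(a, p) = 1 and p | n. Then the Kloosterman sum S(n, a; p^k) = Σ_{b mod p^k, gcd(b,p^k)=1} e((n·b̄ + a·b)/p^k) equals 0, where b̄ denotes the multiplicative inverse of b modulo p^k and e(x) = exp(2πix). -/
/-!
Write `p ^ k = p · m` with `m = p ^ (k-1)`, so that `p ∣ m` and `m` is nilpotent modulo `p ^ k`.
The shift `b ↦ b + m` then permutes the units modulo `p ^ k`, fixes `b̄` modulo `m` and hence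
`n b̄` modulo `p ^ k` (as `p ∣ n`), and multiplies `e(a b / p^k)` by `e(a m / p^k) = e(a / p)`.
So `S = e(a / p) S`, and `e(a / p) ≠ 1` because `p ∤ a`.
-/

/-- `e(x) = exp(2πix)`. -/
noncomputable def e (x : ℝ) : ℂ := Complex.exp (2 * Real.pi * Complex.I * x)

/-- The Kloosterman sum `S(n, a; q) = Σ_{b mod q, gcd(b,q)=1} e((n·b̄ + a·b)/q)`,
where `b̄` is the multiplicative inverse of `b` modulo `q`. -/
noncomputable def kloosterman (n a : ℤ) (q : ℕ) : ℂ :=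
  ∑ b ∈ (Finset.range q).filter (fun b => Nat.Coprime b q),
    e (((n * ((((b : ZMod q))⁻¹.val : ℕ) : ℤ) + a * b : ℤ) : ℝ) / q)

open ZMod

lemma e_intCast_div_eq_stdAddChar {q : ℕ} [NeZero q] (m : ℤ) :
    e ((m : ℝ) / q) = stdAddChar (m : ZMod q) := by
  rw [stdAddChar_coe, e]
  push_cast
  ring_nf

noncomputable def kloostermanTerm (n a : ℤ) (q : ℕ) [NeZero q] (x : ZMod q) : ℂ :=
  stdAddChar ((n : ZMod q) * x⁻¹ + (a : ZMod q) * x)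

lemma kloosterman_eq_sum_isUnit (n a : ℤ) (q : ℕ) [NeZero q] :
    kloosterman n a q = ∑ x : ZMod q with IsUnit x, kloostermanTerm n a q x := by
  refine Finset.sum_nbij' (Nat.cast) ZMod.val (fun b hb => ?_) (fun x hx => ?_)
    (fun b hb => ?_) (fun x _ => natCast_zmod_val x) (fun b _ => ?_)
  · simp only [Finset.mem_filter, Finset.mem_range] at hb
    simpa [isUnit_iff_coprime] using hb.2
  · simp only [Finset.mem_filter, Finset.mem_univ, true_and] at hx
    simpa [val_lt, ← isUnit_iff_coprime, natCast_zmod_val] using hx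
  · simp only [Finset.mem_filter, Finset.mem_range] at hb
    exact val_natCast_of_lt hb.1
  · rw [e_intCast_div_eq_stdAddChar, kloostermanTerm]
    push_cast
    rw [natCast_zmod_val]

lemma IsNilpotent.isUnit_add_iff {R : Type*} [CommRing R] {r u : R} (hr : IsNilpotent r) :
    IsUnit (u + r) ↔ IsUnit u :=
  ⟨fun h => by simpa using hr.neg.isUnit_add_left_of_commute h (Commute.all _ _),
    fun h => hr.isUnit_add_left_of_commute h (Commute.all _ _)⟩

lemma ZMod.mul_inv_add_eq_mul_inv {q : ℕ} {n m x : ZMod q} (hx : IsUnit x)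
    (hxm : IsUnit (x + m)) (hnm : n * m = 0) : n * (x + m)⁻¹ = n * x⁻¹ := by
  linear_combination -(n * (x + m)⁻¹) * mul_inv_of_unit x hx
    + (n * x⁻¹) * mul_inv_of_unit _ hxm - (x⁻¹ * (x + m)⁻¹) * hnm

section Shift

variable {d m : ℕ}

lemma ZMod.isNilpotent_natCast_of_dvd (hdm : d ∣ m) : IsNilpotent (m : ZMod (d * m)) :=
  ⟨2, by rw [← Nat.cast_pow, natCast_eq_zero_iff, sq]; exact Nat.mul_dvd_mul_right hdm m⟩

lemma kloostermanTerm_add_natCast [NeZero (d * m)] {n : ℤ} (a : ℤ) (hdm : d ∣ m)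
    (hn : (d : ℤ) ∣ n) {x : ZMod (d * m)} (hx : IsUnit x) :
    kloostermanTerm n a (d * m) (x + m) =
      stdAddChar ((a * m : ℤ) : ZMod (d * m)) * kloostermanTerm n a (d * m) x := by
  have hxm : IsUnit (x + m) := (isNilpotent_natCast_of_dvd hdm).isUnit_add_iff.mpr hx
  have hnm : (n : ZMod (d * m)) * m = 0 := by
    obtain ⟨c, rfl⟩ := hn
    have hq : ((d * m : ℕ) : ZMod (d * m)) = 0 := natCast_self _
    push_cast at hq ⊢
    linear_combination (c : ZMod (d * m)) * hq
  rw [kloostermanTerm, kloostermanTerm, mul_inv_add_eq_mul_inv hx hxm hnm,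
    ← AddChar.map_add_eq_mul]
  congr 1
  push_cast
  ring

theorem kloosterman_eq_zero_of_dvd_of_not_dvd {n a : ℤ} (hdm : d ∣ m) (hn : (d : ℤ) ∣ n)
    (ha : ¬ (d : ℤ) ∣ a) : kloosterman n a (d * m) = 0 := by
  rcases eq_or_ne (d * m) 0 with hq | hq
  · simp [kloosterman, hq]
  have : NeZero (d * m) := ⟨hq⟩
  have hc : stdAddChar ((a * m : ℤ) : ZMod (d * m)) ≠ 1 := by
    rw [← AddChar.map_zero_eq_one (stdAddChar (N := d * m)), injective_stdAddChar.ne_iff, Ne,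
      intCast_zmod_eq_zero_iff_dvd]
    push_cast
    rwa [mul_dvd_mul_iff_right (by exact_mod_cast right_ne_zero_of_mul hq)]
  have hshift : stdAddChar ((a * m : ℤ) : ZMod (d * m)) *
      ∑ x : ZMod (d * m) with IsUnit x, kloostermanTerm n a (d * m) x =
      ∑ x : ZMod (d * m) with IsUnit x, kloostermanTerm n a (d * m) x := by
    rw [Finset.mul_sum]
    refine Finset.sum_equiv (Equiv.addRight (m : ZMod (d * m))) (fun x => ?_)
      (fun x hx => (kloostermanTerm_add_natCast a hdm hn (Finset.mem_filter.mp hx).2).symm)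
    simp [(isNilpotent_natCast_of_dvd hdm).isUnit_add_iff]
  rw [kloosterman_eq_sum_isUnit]
  by_contra hS
  exact hc ((mul_eq_right₀ hS).mp hshift)

end Shift

theorem kloosterman_eq_zero_of_dvd_general (p : ℕ) (hp : p.Prime)
    (k : ℕ) (hk : 2 ≤ k) (a n : ℤ) (ha : Int.gcd a p = 1) (hn : (p : ℤ) ∣ n) :
    kloosterman n a (p ^ k) = 0 := by
  have hpk : p ^ k = p * p ^ (k - 1) := by rw [← pow_succ']; congr 1; omega
  have hpa : ¬ (p : ℤ) ∣ a := fun h => hp.ne_one <| by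
    have := Int.gcd_eq_right (Int.natCast_nonneg p) h
    rw [ha] at this
    exact_mod_cast this.symm
  rw [hpk]
  exact kloosterman_eq_zero_of_dvd_of_not_dvd (dvd_pow_self p (by omega)) hn hpa

/-- Let `p` be an odd prime, `k ≥ 2`, and `a, n` integers with `gcd(a,p) = 1` and
`p ∣ n`. Then `S(n, a; p^k) = 0`. -/
theorem kloosterman_eq_zero_of_dvd (p : ℕ) (hp : p.Prime) (hodd : Odd p)
    (k : ℕ) (hk : 2 ≤ k) (a n : ℤ) (ha : Int.gcd a p = 1) (hn : (p : ℤ) ∣ n) :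
    kloosterman n a (p ^ k) = 0 :=
  kloosterman_eq_zero_of_dvd_general p hp k hk a n ha hn
end

section
/- Let p be a prime, m = p^μ a prime power, and f(X) = a_0 + a_1X + ⋯ + a_dX^d an integer polynomial of degree d ≥ 2 with gcd(a_0, …, a_d, p) = 1. Then for any integers Q ≥ 1, the number R(Q, p^μ) of solutions x with 1 ≤ x ≤ Q of f(x) ≡ 0 (mod p^μ) satisfies R(Q, p^μ) ≤ C·(d·(Qp)^{1−1/d} + d·Q·p^{−μ/d}) for some absolute constant C, assuming the bound ρ(f, p^ω) ≤ c_d·p^{ω(1−1/d)} for the number of roots modulo p^ω with c_d ≪ d. -/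
/-!
Cover `[1, Q]` by `⌈Q / n⌉` blocks of length `n`: each block contains at most `ρ(f, n)`
roots of `f` modulo `n`. For `n = p^μ ≤ Q` this gives
`2 (Q / p^μ) ρ(f, p^μ) ≤ 2 d Q p^{-μ/d}`. For `Q < p^μ`, pass to the coarser modulus `p^ω`,
`ω ≥ 1` minimal with `Q ≤ p^ω`: a single block suffices, and `p^ω ≤ p Q` bounds `ρ(f, p^ω)`
by `d (Q p)^{1 - 1/d}`.
-/

open Polynomial

theorem Nat.pow_max_one_clog_le_mul {p Q : ℕ} (hp : 1 < p) (hQ : 1 ≤ Q) :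
    p ^ max 1 (Nat.clog p Q) ≤ p * Q := by
  rcases hQ.eq_or_lt with rfl | hQ
  · simp
  · have hclog := Nat.clog_pos hp hQ
    rw [max_eq_right hclog, ← Nat.succ_pred_eq_of_pos hclog, pow_succ']
    exact Nat.mul_le_mul_left p (Nat.pow_pred_clog_lt_self hp hQ).le

namespace Polynomial

/-- `(f.rootsMod n).ncard` is `ρ(f, n)` and `(f.rootsIcc n Q).ncard` is `R(Q, n)`. -/
def rootsMod (f : ℤ[X]) (n : ℤ) : Set ℤ := {x | 0 ≤ x ∧ x < n ∧ n ∣ f.eval x}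

def rootsIcc (f : ℤ[X]) (n Q : ℤ) : Set ℤ := {x | 1 ≤ x ∧ x ≤ Q ∧ n ∣ f.eval x}

variable (f : ℤ[X])

theorem dvd_eval_emod_iff (n x : ℤ) : n ∣ f.eval (x % n) ↔ n ∣ f.eval x := by
  have h : n ∣ f.eval x - f.eval (x % n) :=
    Int.dvd_self_sub_emod.trans (sub_dvd_eval_sub x (x % n) f)
  exact ⟨fun h' => by simpa using dvd_add h' h, fun h' => by simpa using dvd_sub h' h⟩

theorem emod_mem_rootsMod {n x : ℤ} (hn : 0 < n) (hx : n ∣ f.eval x) : x % n ∈ f.rootsMod n :=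
  ⟨Int.emod_nonneg x hn.ne', Int.emod_lt_of_pos x hn, (f.dvd_eval_emod_iff n x).2 hx⟩

theorem rootsMod_finite (n : ℤ) : (f.rootsMod n).Finite :=
  (Set.finite_Ico 0 n).subset fun _ hx => ⟨hx.1, hx.2.1⟩

theorem rootsIcc_finite (n Q : ℤ) : (f.rootsIcc n Q).Finite :=
  (Set.finite_Icc 1 Q).subset fun _ hx => ⟨hx.1, hx.2.1⟩

theorem rootsIcc_subset_of_dvd {m n : ℤ} (h : n ∣ m) (Q : ℤ) :
    f.rootsIcc m Q ⊆ f.rootsIcc n Q :=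
  fun _ ⟨h1, h2, h3⟩ => ⟨h1, h2, h.trans h3⟩

theorem ncard_rootsIcc_le {n : ℕ} (hn : 0 < n) (Q : ℕ) :
    (f.rootsIcc n Q).ncard ≤ (f.rootsMod n).ncard * ((Q - 1) / n + 1) := by
  have hn' : (0 : ℤ) < n := by exact_mod_cast hn
  -- `x` goes to its residue and to the index of the block `[q n + 1, q n + n]` containing it.
  let block : ℤ → ℤ × ℕ := fun x => (x % n, ((x - 1) / n).toNat)
  have hmaps : ∀ x ∈ f.rootsIcc n Q, block x ∈ f.rootsMod n ×ˢ Set.Iic ((Q - 1) / n) := by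
    rintro x ⟨hx1, hxQ, hx⟩
    refine ⟨f.emod_mem_rootsMod hn' hx, ?_⟩
    have : (x - 1) / n ≤ (((Q - 1) / n : ℕ) : ℤ) := by
      rw [Int.natCast_div]; exact Int.ediv_le_ediv hn' (by omega)
    exact Int.toNat_le.2 this
  have hinj : Set.InjOn block (f.rootsIcc n Q) := by
    rintro x ⟨hx1, -, -⟩ y ⟨hy1, -, -⟩ hxy
    obtain ⟨hr, hq⟩ := Prod.mk.inj hxy
    have hr' : (x - 1) % n = (y - 1) % n := Int.ModEq.sub_right 1 hr
    have hq' : (x - 1) / n = (y - 1) / n := by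
      have := Int.ediv_nonneg (by omega : 0 ≤ x - 1) hn'.le
      have := Int.ediv_nonneg (by omega : 0 ≤ y - 1) hn'.le
      omega
    have hx := Int.mul_ediv_add_emod (x - 1) n
    rw [hr', hq'] at hx
    linarith [Int.mul_ediv_add_emod (y - 1) n]
  calc (f.rootsIcc n Q).ncard
      ≤ (f.rootsMod n ×ˢ Set.Iic ((Q - 1) / n)).ncard :=
        Set.ncard_le_ncard_of_injOn block hmaps hinj
          ((f.rootsMod_finite n).prod (Set.finite_Iic _))
    _ = (f.rootsMod n).ncard * ((Q - 1) / n + 1) := by rw [Set.ncard_prod, Set.ncard_Iic_nat]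

theorem ncard_rootsIcc_le_of_le {K e : ℝ} {n Q : ℕ} (hn : 0 < n) (hnQ : n ≤ Q)
    (hρ : ((f.rootsMod n).ncard : ℝ) ≤ K * (n : ℝ) ^ e) :
    ((f.rootsIcc n Q).ncard : ℝ) ≤ 2 * K * Q * (n : ℝ) ^ (e - 1) := by
  have hn' : (0 : ℝ) < n := by exact_mod_cast hn
  have hblocks : (((Q - 1) / n + 1 : ℕ) : ℝ) ≤ 2 * Q / n := by
    have h1 : (((Q - 1) / n : ℕ) : ℝ) ≤ Q / n :=
      (Nat.cast_le.2 (Nat.div_le_div_right (Nat.sub_le Q 1))).trans Nat.cast_div_le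
    have h2 : (1 : ℝ) ≤ Q / n := (one_le_div hn').2 (by exact_mod_cast hnQ)
    push_cast
    rw [mul_div_assoc]
    linarith
  calc ((f.rootsIcc n Q).ncard : ℝ)
      ≤ (f.rootsMod n).ncard * (((Q - 1) / n + 1 : ℕ) : ℝ) := by
        exact_mod_cast f.ncard_rootsIcc_le hn Q
    _ ≤ K * (n : ℝ) ^ e * (2 * Q / n) := by
        gcongr
        exact (Nat.cast_nonneg _).trans hρ
    _ = 2 * K * Q * (n : ℝ) ^ (e - 1) := by
        rw [Real.rpow_sub_one hn'.ne']; ring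

theorem ncard_rootsIcc_pow_le_of_lt {K e : ℝ} (hK : 0 ≤ K) (he : 0 ≤ e) {p μ Q : ℕ}
    (hp : 1 < p) (hQ : 1 ≤ Q) (hQμ : Q < p ^ μ)
    (hρ : ∀ ω, 1 ≤ ω →
      ((f.rootsMod (p ^ ω : ℕ)).ncard : ℝ) ≤ K * ((p ^ ω : ℕ) : ℝ) ^ e) :
    ((f.rootsIcc (p ^ μ : ℕ) Q).ncard : ℝ) ≤ K * ((Q : ℝ) * p) ^ e := by
  set ω := max 1 (Nat.clog p Q)
  have hωμ : ω ≤ μ :=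
    max_le (Nat.one_le_iff_ne_zero.2 (by rintro rfl; rw [pow_zero] at hQμ; omega))
      (Nat.clog_le_of_le_pow hQμ.le)
  have hQω : Q ≤ p ^ ω :=
    (Nat.le_pow_clog hp Q).trans (Nat.pow_le_pow_right (by omega) (le_max_right _ _))
  have hsub : f.rootsIcc (p ^ μ : ℕ) Q ⊆ f.rootsIcc (p ^ ω : ℕ) Q :=
    f.rootsIcc_subset_of_dvd (Int.natCast_dvd_natCast.2 (Nat.pow_dvd_pow p hωμ)) Q
  have hcount : (f.rootsIcc (p ^ ω : ℕ) Q).ncard ≤ (f.rootsMod (p ^ ω : ℕ)).ncard := by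
    have := f.ncard_rootsIcc_le (n := p ^ ω) (by positivity) Q
    rwa [Nat.div_eq_of_lt (by omega), zero_add, mul_one] at this
  calc ((f.rootsIcc (p ^ μ : ℕ) Q).ncard : ℝ)
      ≤ (f.rootsMod (p ^ ω : ℕ)).ncard := by
        exact_mod_cast (Set.ncard_le_ncard hsub (f.rootsIcc_finite _ _)).trans hcount
    _ ≤ K * ((p ^ ω : ℕ) : ℝ) ^ e := hρ ω (le_max_left _ _)
    _ ≤ K * ((Q : ℝ) * p) ^ e := by
        gcongr
        rw [mul_comm]; exact_mod_cast Nat.pow_max_one_clog_le_mul hp hQ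

end Polynomial

/-- Let `p` be prime, `f ∈ ℤ[X]` of degree `d ≥ 2` with not all coefficients divisible
by `p` (i.e. `gcd(a_0,…,a_d,p) = 1`). Assuming the root-count bound
`ρ(f, p^ω) ≤ c_d · (p^ω)^{1−1/d}` with `c_d ≪ d`, the number `R(Q, p^μ)` of solutions
`1 ≤ x ≤ Q` of `f(x) ≡ 0 (mod p^μ)` satisfies
`R(Q, p^μ) ≤ C (d (Qp)^{1−1/d} + d Q p^{−μ/d})` for an absolute constant `C`. -/
theorem count_poly_roots_interval :
    ∃ C : ℝ, 0 < C ∧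
      ∀ (p d μ Q : ℕ) (f : Polynomial ℤ) (cd : ℝ),
        p.Prime → 2 ≤ d → f.natDegree = d → (∃ i, ¬ (p : ℤ) ∣ f.coeff i) →
        1 ≤ μ → 1 ≤ Q → cd ≤ (d : ℝ) →
        (∀ ω : ℕ, 1 ≤ ω →
          (Set.ncard {x : ℤ | 0 ≤ x ∧ x < (p : ℤ) ^ ω ∧ (p : ℤ) ^ ω ∣ f.eval x} : ℝ)
            ≤ cd * ((p : ℝ) ^ ω) ^ (1 - 1 / (d : ℝ))) →
        (Set.ncard {x : ℤ | 1 ≤ x ∧ x ≤ (Q : ℤ) ∧ (p : ℤ) ^ μ ∣ f.eval x} : ℝ)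
          ≤ C * ((d : ℝ) * ((Q : ℝ) * p) ^ (1 - 1 / (d : ℝ))
              + (d : ℝ) * Q * (p : ℝ) ^ (-(μ : ℝ) / d)) := by
  refine ⟨2, two_pos, fun p d μ Q f cd hp _ _ _ hμ hQ hcd hrho => ?_⟩
  set e : ℝ := 1 - 1 / (d : ℝ)
  have he : 0 ≤ e := sub_nonneg.2 (one_div (d : ℝ) ▸ Nat.cast_inv_le_one d)
  have hρ : ∀ ω, 1 ≤ ω →
      ((f.rootsMod (p ^ ω : ℕ)).ncard : ℝ) ≤ d * ((p ^ ω : ℕ) : ℝ) ^ e := by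
    intro ω hω
    push_cast
    exact (hrho ω hω).trans (by gcongr)
  change ((f.rootsIcc ((p : ℤ) ^ μ) Q).ncard : ℝ) ≤ _
  have hterm₁ : 0 ≤ (d : ℝ) * ((Q : ℝ) * p) ^ e := by positivity
  have hterm₂ : 0 ≤ (d : ℝ) * Q * (p : ℝ) ^ (-(μ : ℝ) / d) := by positivity
  rcases le_or_gt (p ^ μ) Q with hle | hlt
  · have key := f.ncard_rootsIcc_le_of_le (pow_pos hp.pos μ) hle (hρ μ hμ)
    push_cast at key
    rw [← Real.rpow_natCast, ← Real.rpow_mul (Nat.cast_nonneg p)] at key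
    rw [show (μ : ℝ) * (e - 1) = -(μ : ℝ) / d by ring] at key
    linarith
  · have key := f.ncard_rootsIcc_pow_le_of_lt d.cast_nonneg he hp.one_lt hQ hlt hρ
    push_cast at key
    linarith
end

section
/- Let p be an odd prime, i ≥ 3, and 3 ≤ u ≤ i. Then ν_p( C(1/2, i) · i!/(i−u)! ) ≤ u·Σ_{j=1}^{∞} p^{−j} + 3·log(2i)/log p, where C(1/2, i) is the generalized binomial coefficient and ν_p the p-adic valuation on ℚ. -/
/-!
Write `i = n + 1` and `k = i - u`. Then `C(1/2, n+1) · (n+1)!/k! = ±(2n)! / (2^(2n+1) n! k!)`, so for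
odd `p` the valuation is `ν_p((2n)!) - ν_p(n!) - ν_p(k!)`. By Legendre's formula this is the sum over
`1 ≤ j ≤ log_p(2n)` of `⌊2n/p^j⌋ - ⌊n/p^j⌋ - ⌊k/p^j⌋ < (n - k)/p^j + 2`, and `n - k = u - 1`.
-/

/-- The generalized binomial coefficient `(1/2 choose i)` as a rational number. -/
noncomputable def chooseHalf (i : ℕ) : ℚ :=
  (∏ j ∈ Finset.range i, ((1 : ℚ) / 2 - j)) / (Nat.factorial i : ℚ)

open Finset Nat

theorem prod_range_succ_half_sub_mul (n : ℕ) :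
    (∏ j ∈ range (n + 1), ((1 : ℚ) / 2 - j)) * (2 ^ (2 * n + 1) * n !) = (-1) ^ n * (2 * n)! := by
  induction n with
  | zero => norm_num
  | succ n ih =>
    rw [prod_range_succ, show 2 * (n + 1) = 2 * n + 1 + 1 by ring, factorial_succ, factorial_succ,
      factorial_succ]
    push_cast
    linear_combination (-(2 * (n : ℚ) + 1) * (2 * n + 2)) * ih

theorem chooseHalf_succ_mul_factorial_div (n k : ℕ) :
    chooseHalf (n + 1) * ((n + 1)! / k ! : ℚ) =
      (-1) ^ n * (2 * n)! / ((2 ^ (2 * n + 1) * n ! * k ! : ℕ) : ℚ) := by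
  rw [chooseHalf, ← prod_range_succ_half_sub_mul]
  push_cast
  field_simp

theorem padicValRat_chooseHalf_succ_mul_factorial_div {p : ℕ} [Fact p.Prime] (hp : p ≠ 2)
    (n k : ℕ) :
    padicValRat p (chooseHalf (n + 1) * ((n + 1)! / k ! : ℚ)) =
      (padicValNat p (2 * n)! : ℤ) - padicValNat p n ! - padicValNat p k ! := by
  have : Fact (2 : ℕ).Prime := ⟨prime_two⟩
  rw [chooseHalf_succ_mul_factorial_div, mul_div_assoc, padicValRat.mul (by simp) (by positivity),
    padicValRat.pow, padicValRat.neg, padicValRat.one, padicValRat.div (by positivity)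
    (by positivity), padicValRat.of_nat, padicValRat.of_nat,
    padicValNat.mul (by positivity) (by positivity), padicValNat.mul (by positivity) (by positivity),
    padicValNat.pow, padicValNat_primes hp]
  push_cast
  ring

theorem cast_two_mul_div_sub_div_sub_div_lt (q n k : ℕ) :
    (((2 * n / q : ℕ) : ℝ) - (n / q : ℕ) - (k / q : ℕ)) < ((n : ℝ) - k) / q + 2 := by
  have h2n : ((2 * n / q : ℕ) : ℝ) ≤ 2 * n / q := by exact_mod_cast Nat.cast_div_le
  have lower (a : ℕ) : (a : ℝ) / q - 1 < (a / q : ℕ) := by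
    rw [← Nat.floor_div_eq_div (K := ℝ)]; exact Nat.sub_one_lt_floor _
  have hn := lower n
  have hk := lower k
  have : ((n : ℝ) - k) / q = 2 * n / q - n / q - k / q := by ring
  linarith

theorem sum_Ico_one_pow_le_tsum {r : ℝ} (h0 : 0 ≤ r) (h1 : r < 1) (b : ℕ) :
    ∑ j ∈ Ico 1 b, r ^ j ≤ ∑' j : ℕ, r ^ (j + 1) := by
  rw [sum_Ico_eq_sum_range]
  simp only [add_comm 1]
  exact ((summable_geometric_of_lt_one h0 h1).comp_injective (add_left_injective 1)).sum_le_tsum _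
    fun j _ => pow_nonneg h0 _

theorem padicValNat_factorial_two_mul_sub_le {p : ℕ} [hp : Fact p.Prime] {n k : ℕ} (hk : k ≤ n) :
    ((padicValNat p (2 * n)! : ℝ) - padicValNat p n ! - padicValNat p k !) ≤
      (n - k) * ∑' j : ℕ, (p : ℝ)⁻¹ ^ (j + 1) + 2 * Nat.log p (2 * n) := by
  set L := Nat.log p (2 * n)
  have legendre {a : ℕ} (ha : a ≤ 2 * n) : padicValNat p a ! = ∑ j ∈ Ico 1 (L + 1), a / p ^ j :=
    padicValNat_factorial (Nat.lt_succ_of_le (Nat.log_mono_right ha))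
  rw [legendre le_rfl, legendre (by omega), legendre (by omega)]
  push_cast
  rw [← sum_sub_distrib, ← sum_sub_distrib]
  have hp0 : (0 : ℝ) ≤ (p : ℝ)⁻¹ := by positivity
  have hp1 : (p : ℝ)⁻¹ < 1 := inv_lt_one_of_one_lt₀ (by exact_mod_cast hp.out.one_lt)
  calc _ ≤ ∑ j ∈ Ico 1 (L + 1), (((n : ℝ) - k) * (p : ℝ)⁻¹ ^ j + 2) := by
        refine sum_le_sum fun j _ => ?_
        have := cast_two_mul_div_sub_div_sub_div_lt (p ^ j) n k
        push_cast at this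
        rw [inv_pow, ← div_eq_mul_inv]
        exact this.le
    _ = (n - k) * ∑ j ∈ Ico 1 (L + 1), (p : ℝ)⁻¹ ^ j + 2 * L := by
        rw [sum_add_distrib, ← mul_sum, sum_const, Nat.card_Ico]
        simp only [Nat.add_sub_cancel, nsmul_eq_mul]
        ring
    _ ≤ _ := by
        gcongr
        · exact sub_nonneg.2 (by exact_mod_cast hk)
        · exact sum_Ico_one_pow_le_tsum hp0 hp1 _

/-- For an odd prime `p`, `i ≥ 3` and `3 ≤ u ≤ i`,
`ν_p( C(1/2, i) · i!/(i−u)! ) ≤ u·Σ_{j=1}^∞ p^{−j} + 3 log(2i)/log p`. -/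
theorem padicValRat_chooseHalf_mul_le (p : ℕ) (hp : p.Prime) (hodd : Odd p)
    (i u : ℕ) (hu3 : 3 ≤ u) (hui : u ≤ i) :
    (padicValRat p (chooseHalf i *
        ((Nat.factorial i : ℚ) / (Nat.factorial (i - u) : ℚ))) : ℝ)
      ≤ (u : ℝ) * (∑' j : ℕ, ((p : ℝ))⁻¹ ^ (j + 1))
        + 3 * Real.log (2 * i) / Real.log p := by
  have : Fact p.Prime := ⟨hp⟩
  obtain ⟨n, rfl⟩ : ∃ n, i = n + 1 := ⟨i - 1, by omega⟩
  have hp2 : p ≠ 2 := by rintro rfl; exact absurd hodd (by decide)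
  have hn : (2 : ℝ) ≤ n := by exact_mod_cast (by omega : 2 ≤ n)
  rw [padicValRat_chooseHalf_succ_mul_factorial_div hp2]
  simp only [Int.cast_sub, Int.cast_natCast]
  have hT : 0 ≤ ∑' j : ℕ, (p : ℝ)⁻¹ ^ (j + 1) := tsum_nonneg fun j => by positivity
  have hlogp : 0 < Real.log p := Real.log_pos (by exact_mod_cast hp.one_lt)
  have hL : (Nat.log p (2 * n) : ℝ) ≤ Real.log (2 * (n + 1)) / Real.log p := by
    refine (Real.natLog_le_logb _ _).trans ?_
    rw [Real.logb]
    gcongr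
    · push_cast; linarith
    · push_cast; linarith
  have hlog : 0 ≤ Real.log (2 * (n + 1)) := Real.log_nonneg (by linarith)
  calc _ ≤ (n - (n + 1 - u : ℕ)) * ∑' j : ℕ, (p : ℝ)⁻¹ ^ (j + 1) + 2 * Nat.log p (2 * n) :=
        padicValNat_factorial_two_mul_sub_le (by omega)
    _ ≤ _ := by
        rw [Nat.cast_sub hui, mul_div_assoc]
        push_cast
        nlinarith [div_nonneg hlog hlogp.le]
end
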